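/- If R(y) = 2P(y) - y lies in the set Q = {z : S_γ(z) has sign pattern compatible with x*} (i.e., z_j > γ if x*_j > 0, z_j < -γ if x*_j < 0, |z_j| ≤ γ if x*_j = 0), and y* is a fixed point of T_γ, then T_γ(y) - T_γ(y*) = [(I - B^+B)(I - A^+A) + B^+B A^+A](y - y*). -/

import Mathlib

open Finset Matrix

/-- Soft-thresholding by `γ`. -/
noncomputable def softThresh {n : ℕ} (γ : ℝ) (x : Fin n → ℝ) : Fin n → ℝ :=
  fun i => Real.sign (x i) * max (|x i| - γ) 0

/-- Projection onto the affine set `{x : Ax = b}`. -/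
noncomputable def projAff {m n : ℕ} (A : Matrix (Fin m) (Fin n) ℝ) (b : Fin m → ℝ)
    (x : Fin n → ℝ) : Fin n → ℝ :=
  x + (Aᵀ * (A * Aᵀ)⁻¹).mulVec (b - A.mulVec x)

/-- Douglas-Rachford operator `T_γ = S_γ ∘ (2P - I) + I - P` for basis pursuit. -/
noncomputable def DR {m n : ℕ} (A : Matrix (Fin m) (Fin n) ℝ) (b : Fin m → ℝ)
    (γ : ℝ) (y : Fin n → ℝ) : Fin n → ℝ :=
  softThresh γ ((2 : ℝ) • projAff A b y - y) + y - projAff A b y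

/-- `z ∈ Q`: the soft-threshold of `z` has the sign pattern of `x*`. -/
def inQ {n : ℕ} (γ : ℝ) (xs z : Fin n → ℝ) : Prop :=
  ∀ j, (0 < xs j → γ < z j) ∧ (xs j < 0 → z j < -γ) ∧ (xs j = 0 → |z j| ≤ γ)

/-!
A fixed point `y*` of `T_γ` makes `p = P(y*)` a basis pursuit solution: `u = p - y*` equals
`R(y*) - S_γ(R(y*))`, which is a subgradient of `γ‖·‖₁` at `p = S_γ(R(y*))`, and `u ∈ R(Aᵀ)` is
orthogonal to `ker A`, so `γ‖p‖₁ = ⟨u, p⟩ = ⟨u, x⟩ ≤ γ‖x‖₁` for every feasible `x`. Uniqueness gives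
`p = x*`, hence `R(y*) ∈ Q` too. On `Q` soft-thresholding is affine with linear part `I - B⁺B`, and
`P` is affine with linear part `I - A⁺A`, so
`T_γ(y) - T_γ(y*) = (I - B⁺B)(I - 2A⁺A)(y - y*) + A⁺A(y - y*)`, which rearranges to the claim.
-/

section SoftThreshold

variable {n : ℕ} {γ : ℝ}

lemma softThresh_apply_cases (hγ : 0 ≤ γ) (z : Fin n → ℝ) (j : Fin n) :
    (γ < z j ∧ softThresh γ z j = z j - γ) ∨ (z j < -γ ∧ softThresh γ z j = z j + γ) ∨
      (|z j| ≤ γ ∧ softThresh γ z j = 0) := by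
  simp only [softThresh]
  rcases lt_or_ge γ (z j) with h | h
  · left
    rw [Real.sign_of_pos (by linarith), abs_of_pos (by linarith), max_eq_left (by linarith)]
    exact ⟨h, by ring⟩
  rcases lt_or_ge (z j) (-γ) with h' | h'
  · right; left
    rw [Real.sign_of_neg (by linarith), abs_of_neg (by linarith), max_eq_left (by linarith)]
    exact ⟨h', by ring⟩
  · have habs : |z j| ≤ γ := abs_le.2 ⟨h', h⟩
    right; right
    rw [max_eq_right (by linarith)]
    exact ⟨habs, by ring⟩

lemma abs_sub_softThresh_le (hγ : 0 ≤ γ) (z : Fin n → ℝ) (j : Fin n) :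
    |z j - softThresh γ z j| ≤ γ := by
  rcases softThresh_apply_cases hγ z j with ⟨-, h⟩ | ⟨-, h⟩ | ⟨hz, h⟩ <;> rw [h]
  · simp [abs_of_nonneg hγ]
  · simp [abs_of_nonneg hγ]
  · simpa using hz

lemma sub_softThresh_mul_softThresh (hγ : 0 ≤ γ) (z : Fin n → ℝ) (j : Fin n) :
    (z j - softThresh γ z j) * softThresh γ z j = γ * |softThresh γ z j| := by
  rcases softThresh_apply_cases hγ z j with ⟨hz, h⟩ | ⟨hz, h⟩ | ⟨-, h⟩ <;> rw [h]
  · rw [abs_of_pos (by linarith)]; ring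
  · rw [abs_of_neg (by linarith)]; ring
  · simp

lemma inQ_softThresh (hγ : 0 ≤ γ) (z : Fin n → ℝ) : inQ γ (softThresh γ z) z := by
  intro j
  rcases softThresh_apply_cases hγ z j with ⟨hz, h⟩ | ⟨hz, h⟩ | ⟨hz, h⟩ <;> rw [h] <;>
    refine ⟨fun _ => ?_, fun _ => ?_, fun _ => ?_⟩ <;> linarith

lemma softThresh_apply_of_inQ (hγ : 0 ≤ γ) {xs z : Fin n → ℝ} (hz : inQ γ xs z) (j : Fin n) :
    softThresh γ z j = if xs j = 0 then 0 else z j - γ * Real.sign (xs j) := by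
  obtain ⟨hpos, hneg, hzero⟩ := hz j
  have hcases := softThresh_apply_cases hγ z j
  rcases lt_trichotomy (xs j) 0 with hx | hx | hx
  · rw [if_neg hx.ne, Real.sign_of_neg hx]
    have := neg_abs_le (z j)
    rcases hcases with ⟨h, -⟩ | ⟨-, h⟩ | ⟨h, -⟩ <;> linarith [hneg hx]
  · rw [if_pos hx]
    rcases hcases with ⟨h, -⟩ | ⟨h, -⟩ | ⟨-, h⟩ <;> linarith [abs_le.1 (hzero hx)]
  · rw [if_neg hx.ne', Real.sign_of_pos hx]
    have := le_abs_self (z j)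
    rcases hcases with ⟨-, h⟩ | ⟨h, -⟩ | ⟨h, -⟩ <;> linarith [hpos hx]

lemma softThresh_sub_softThresh_of_inQ (hγ : 0 ≤ γ) {xs z z' : Fin n → ℝ} (hz : inQ γ xs z)
    (hz' : inQ γ xs z') :
    softThresh γ z - softThresh γ z' =
      (1 - diagonal (fun j => if xs j = 0 then (1 : ℝ) else 0)) *ᵥ (z - z') := by
  ext j
  simp only [sub_mulVec, one_mulVec, Pi.sub_apply, mulVec_diagonal,
    softThresh_apply_of_inQ hγ hz, softThresh_apply_of_inQ hγ hz']
  split_ifs <;> ring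

end SoftThreshold

lemma Matrix.isUnit_of_rank_eq_card {K ι : Type*} [Field K] [Fintype ι] [DecidableEq ι]
    {M : Matrix ι ι K} (h : M.rank = Fintype.card ι) : IsUnit M := by
  rw [← mulVec_surjective_iff_isUnit, ← coe_mulVecLin, ← LinearMap.range_eq_top]
  apply Submodule.eq_top_of_finrank_eq
  rw [← Matrix.rank, h, Module.finrank_fintype_fun_eq_card]

lemma Matrix.mul_transpose_mul_inv_of_rank_eq_card {K ι κ : Type*} [Field K] [LinearOrder K]
    [IsStrictOrderedRing K] [Fintype ι] [DecidableEq ι] [Fintype κ] {A : Matrix ι κ K}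
    (h : A.rank = Fintype.card ι) : A * (Aᵀ * (A * Aᵀ)⁻¹) = 1 := by
  have hAAt : IsUnit (A * Aᵀ) := isUnit_of_rank_eq_card (by rw [rank_self_mul_transpose, h])
  rw [← Matrix.mul_assoc, mul_nonsing_inv _ ((isUnit_iff_isUnit_det _).mp hAAt)]

section AffineProjection

variable {m n : ℕ} {A : Matrix (Fin m) (Fin n) ℝ} {b : Fin m → ℝ}

lemma mulVec_projAff (hA : A * (Aᵀ * (A * Aᵀ)⁻¹) = 1) (x : Fin n → ℝ) :
    A *ᵥ projAff A b x = b := by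
  simp [projAff, mulVec_add, mulVec_mulVec, hA]

lemma projAff_sub_projAff (x x' : Fin n → ℝ) :
    projAff A b x - projAff A b x' = (1 - Aᵀ * (A * Aᵀ)⁻¹ * A) *ᵥ (x - x') := by
  simp only [projAff, sub_mulVec, one_mulVec, mulVec_sub, ← mulVec_mulVec]
  abel

lemma dotProduct_projAff_sub_eq_zero (hA : A * (Aᵀ * (A * Aᵀ)⁻¹) = 1) {w : Fin n → ℝ}
    (hw : A *ᵥ w = b) (x : Fin n → ℝ) :
    (projAff A b x - x) ⬝ᵥ (w - projAff A b x) = 0 := by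
  have hker : A *ᵥ (w - projAff A b x) = 0 := by rw [mulVec_sub, hw, mulVec_projAff hA, sub_self]
  have hrange : projAff A b x - x = Aᵀ *ᵥ ((A * Aᵀ)⁻¹ *ᵥ (b - A *ᵥ x)) := by
    simp [projAff, mulVec_mulVec]
  rw [hrange, dotProduct_comm, dotProduct_mulVec, vecMul_transpose, hker, zero_dotProduct]

end AffineProjection

section DouglasRachford

variable {m n : ℕ} {A : Matrix (Fin m) (Fin n) ℝ} {b : Fin m → ℝ} {γ : ℝ}

lemma softThresh_reflect_of_DR_eq_self {y : Fin n → ℝ} (hfix : DR A b γ y = y) :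
    softThresh γ ((2 : ℝ) • projAff A b y - y) = projAff A b y := by
  unfold DR at hfix
  linear_combination hfix

lemma sum_abs_projAff_le_of_DR_eq_self (hγ : 0 < γ) (hA : A * (Aᵀ * (A * Aᵀ)⁻¹) = 1)
    {y w : Fin n → ℝ} (hfix : DR A b γ y = y) (hw : A *ᵥ w = b) :
    ∑ j, |projAff A b y j| ≤ ∑ j, |w j| := by
  set p := projAff A b y
  set z := (2 : ℝ) • p - y
  have hp : softThresh γ z = p := softThresh_reflect_of_DR_eq_self hfix
  have hu : p - y = z - softThresh γ z := by rw [hp]; simp only [z]; module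
  have hbound : ∀ j, |(p - y) j| ≤ γ := fun j => by
    rw [hu]; exact abs_sub_softThresh_le hγ.le z j
  have hsupp : ∀ j, (p - y) j * p j = γ * |p j| := fun j => by
    rw [hu, ← hp]; exact sub_softThresh_mul_softThresh hγ.le z j
  have horth : (p - y) ⬝ᵥ (w - p) = 0 := dotProduct_projAff_sub_eq_zero hA hw y
  have key : γ * ∑ j, |p j| ≤ γ * ∑ j, |w j| := calc
    γ * ∑ j, |p j| = (p - y) ⬝ᵥ p := by simp only [dotProduct, mul_sum, hsupp]
    _ = (p - y) ⬝ᵥ w := by rw [dotProduct_sub] at horth; linarith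
    _ ≤ ∑ j, γ * |w j| := sum_le_sum fun j _ => (le_abs_self _).trans <| by
        rw [abs_mul]; exact mul_le_mul_of_nonneg_right (hbound j) (abs_nonneg _)
    _ = γ * ∑ j, |w j| := (mul_sum ..).symm
  exact le_of_mul_le_mul_left key hγ

lemma DR_sub_DR (y y' : Fin n → ℝ) :
    DR A b γ y - DR A b γ y' =
      softThresh γ ((2 : ℝ) • projAff A b y - y) - softThresh γ ((2 : ℝ) • projAff A b y' - y')
        + (Aᵀ * (A * Aᵀ)⁻¹ * A) *ᵥ (y - y') := by
  have hP := projAff_sub_projAff (A := A) (b := b) y y'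
  rw [sub_mulVec, one_mulVec] at hP
  unfold DR
  linear_combination -hP

lemma reflect_sub_reflect (y y' : Fin n → ℝ) :
    ((2 : ℝ) • projAff A b y - y) - ((2 : ℝ) • projAff A b y' - y') =
      (1 - (2 : ℝ) • (Aᵀ * (A * Aᵀ)⁻¹ * A)) *ᵥ (y - y') := by
  have hP := projAff_sub_projAff (A := A) (b := b) y y'
  rw [sub_mulVec, one_mulVec] at hP
  rw [sub_mulVec, one_mulVec, smul_mulVec]
  linear_combination (norm := module) (2 : ℝ) • hP

end DouglasRachford

/-- If `R(y) = 2P(y) - y ∈ Q` and `y*` is a fixed point of `T_γ`, then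
`T_γ(y) - T_γ(y*) = [(I - B⁺B)(I - A⁺A) + B⁺B A⁺A](y - y*)`, where `B⁺B` is the
diagonal projection onto coordinates where `x* = 0` and `A⁺A = Aᵀ(AAᵀ)⁻¹A`. -/
theorem stmt7 {m n : ℕ} (A : Matrix (Fin m) (Fin n) ℝ) (b : Fin m → ℝ)
    (hrank : A.rank = m) (γ : ℝ) (hγ : 0 < γ)
    (xs : Fin n → ℝ)
    (hfeas : A.mulVec xs = b)
    (hmin : ∀ x : Fin n → ℝ, A.mulVec x = b → ∑ i, |xs i| ≤ ∑ i, |x i|)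
    (huniq : ∀ x : Fin n → ℝ, A.mulVec x = b → (∑ i, |x i|) = ∑ i, |xs i| → x = xs)
    (y ys : Fin n → ℝ)
    (hy : inQ γ xs ((2 : ℝ) • projAff A b y - y))
    (hfix : DR A b γ ys = ys) :
    DR A b γ y - DR A b γ ys =
      (((1 : Matrix (Fin n) (Fin n) ℝ)
          - Matrix.diagonal (fun j => if xs j = 0 then (1 : ℝ) else 0))
        * ((1 : Matrix (Fin n) (Fin n) ℝ) - (Aᵀ * (A * Aᵀ)⁻¹) * A)
        + Matrix.diagonal (fun j => if xs j = 0 then (1 : ℝ) else 0)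
          * ((Aᵀ * (A * Aᵀ)⁻¹) * A)).mulVec (y - ys) := by
  have hA := mul_transpose_mul_inv_of_rank_eq_card (A := A) (by rw [hrank, Fintype.card_fin])
  have hPys : projAff A b ys = xs :=
    huniq _ (mulVec_projAff hA ys) <| le_antisymm
      (sum_abs_projAff_le_of_DR_eq_self hγ hA hfix hfeas) (hmin _ (mulVec_projAff hA ys))
  have hys : inQ γ xs ((2 : ℝ) • projAff A b ys - ys) :=
    (softThresh_reflect_of_DR_eq_self hfix).trans hPys ▸ inQ_softThresh hγ.le _
  rw [DR_sub_DR, softThresh_sub_softThresh_of_inQ hγ.le hy hys, reflect_sub_reflect,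
    mulVec_mulVec, ← add_mulVec]
  congr 1
  simp only [two_smul]
  noncomm_ring
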